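/- arXiv:1211.1209 — 4 statements merged into one kernel-verified Lean document; each statement's English description precedes it below -/
import Mathlib

section
/- A diagonal density matrix σ = Σ_j s_j |j⟩⟨j| (in the eigenbasis of H with eigenvalues ε_1 < ε_2 < ... < ε_d) satisfies tr(σH) ≤ tr(UσU†H) for all unitaries U if and only if its eigenvalues are non-increasing in energy, i.e., s_{j+1} ≤ s_j for all j. -/
open Matrix BigOperators
open scoped Classical ComplexOrder

noncomputable section

def energy {ι : Type*} [Fintype ι] (H ρ : Matrix ι ι ℂ) : ℝ :=
  (Matrix.trace (ρ * H)).re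

def IsDensity {ι : Type*} [Fintype ι] [DecidableEq ι] (ρ : Matrix ι ι ℂ) : Prop :=
  ρ.PosSemidef ∧ ρ.trace = 1

def IsPassive {ι : Type*} [Fintype ι] [DecidableEq ι] (H σ : Matrix ι ι ℂ) : Prop :=
  ∀ U ∈ Matrix.unitaryGroup ι ℂ, energy H σ ≤ energy H (U * σ * star U)

def vnEntropy {ι : Type*} [Fintype ι] [DecidableEq ι] (ρ : Matrix ι ι ℂ) : ℝ :=
  if h : ρ.IsHermitian then ∑ i, Real.negMulLog (h.eigenvalues i) else 0

def gibbs {ι : Type*} [Fintype ι] [DecidableEq ι] (H : Matrix ι ι ℂ) (β : ℝ) :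
    Matrix ι ι ℂ :=
  (Matrix.trace (NormedSpace.exp ((-β : ℂ) • H)))⁻¹ • NormedSpace.exp ((-β : ℂ) • H)

def tensPow {d : ℕ} (n : ℕ) (ρ : Matrix (Fin d) (Fin d) ℂ) :
    Matrix (Fin n → Fin d) (Fin n → Fin d) ℂ :=
  Matrix.of fun i j => ∏ m, ρ (i m) (j m)

def sumHam {d : ℕ} (n : ℕ) (H : Matrix (Fin d) (Fin d) ℂ) :
    Matrix (Fin n → Fin d) (Fin n → Fin d) ℂ :=
  Matrix.of fun i j => ∑ m, H (i m) (j m) * ∏ l ∈ Finset.univ.erase m, (if i l = j l then (1:ℂ) else 0)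

/-!
Conjugating `diag s` by a unitary `U` gives energy `ε ⬝ᵥ (B *ᵥ s)` with `B i j = |U i j|²`, and
`B` is doubly stochastic. By Birkhoff's theorem `B` is a convex combination of permutation
matrices, so no unitary lowers the energy as soon as no permutation of the populations does, and
by the rearrangement inequality none does when `s` antivaries with `ε`. Conversely, swapping the
populations of levels `i` and `j` changes the energy by `(s i - s j) * (ε j - ε i)`.
-/

open Equiv

namespace Matrix

variable {ι : Type*} [DecidableEq ι]

lemma of_normSq_permMatrix (σ : Perm ι) :
    of (fun i j => Complex.normSq (σ.permMatrix ℂ i j)) = σ.permMatrix ℝ := by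
  ext i j
  simp [PEquiv.toMatrix_apply, apply_ite]

variable [Fintype ι]

lemma permMatrix_mem_unitaryGroup (σ : Perm ι) : σ.permMatrix ℂ ∈ unitaryGroup ι ℂ := by
  rw [mem_unitaryGroup_iff', star_eq_conjTranspose, conjTranspose_permMatrix, ← permMatrix_mul,
    mul_inv_cancel, permMatrix_one]

lemma of_normSq_mem_doublyStochastic {U : Matrix ι ι ℂ} (hU : U ∈ unitaryGroup ι ℂ) :
    of (fun i j => Complex.normSq (U i j)) ∈ doublyStochastic ℝ ι := by
  have hrow (i : ι) : ∑ j, Complex.normSq (U i j) = 1 := by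
    have h := congr_fun₂ (mem_unitaryGroup_iff.1 hU) i i
    simp only [mul_apply, star_apply, RCLike.star_def, Complex.mul_conj, one_apply_eq] at h
    exact_mod_cast h
  have hcol (j : ι) : ∑ i, Complex.normSq (U i j) = 1 := by
    have h := congr_fun₂ (mem_unitaryGroup_iff'.1 hU) j j
    simp only [mul_apply, star_apply, RCLike.star_def, mul_comm (starRingEnd ℂ _),
      Complex.mul_conj, one_apply_eq] at h
    exact_mod_cast h
  exact mem_doublyStochastic_iff_sum.2 ⟨fun i j => Complex.normSq_nonneg _, hrow, hcol⟩

lemma dotProduct_comp_swap_sub (ε s : ι → ℝ) {i j : ι} (hij : i ≠ j) :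
    ε ⬝ᵥ (s ∘ Equiv.swap i j) - ε ⬝ᵥ s = (s i - s j) * (ε j - ε i) := by
  rw [← dotProduct_sub, dotProduct, Fintype.sum_eq_add i j hij]
  · simp only [Pi.sub_apply, Function.comp_apply, swap_apply_left, swap_apply_right]
    ring
  · rintro k ⟨hki, hkj⟩
    simp [swap_apply_of_ne_of_ne hki hkj]

theorem _root_.Antivary.dotProduct_le_dotProduct_mulVec {ε s : ι → ℝ} (h : Antivary ε s)
    {B : Matrix ι ι ℝ} (hB : B ∈ doublyStochastic ℝ ι) : ε ⬝ᵥ s ≤ ε ⬝ᵥ (B *ᵥ s) := by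
  have hlin : IsLinearMap ℝ fun B : Matrix ι ι ℝ => ε ⬝ᵥ (B *ᵥ s) :=
    ⟨fun B C => by simp [add_mulVec, dotProduct_add], fun c B => by simp [smul_mulVec]⟩
  rw [← SetLike.mem_coe, doublyStochastic_eq_convexHull_permMatrix] at hB
  refine convexHull_min ?_ (convex_halfSpace_ge hlin _) hB
  rintro _ ⟨σ, rfl⟩
  simpa [permMatrix_mulVec, dotProduct] using h.sum_mul_le_sum_mul_comp_perm (σ := σ)

end Matrix

open Matrix

variable {ι : Type*} [Fintype ι] [DecidableEq ι]

lemma energy_diagonal_diagonal (ε s : ι → ℝ) :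
    energy (diagonal fun i => (ε i : ℂ)) (diagonal fun i => (s i : ℂ)) = ε ⬝ᵥ s := by
  simp [energy, trace_diagonal, dotProduct, mul_comm]

lemma energy_diagonal_conj (ε s : ι → ℝ) (U : Matrix ι ι ℂ) :
    energy (diagonal fun i => (ε i : ℂ)) (U * diagonal (fun i => (s i : ℂ)) * star U) =
      ε ⬝ᵥ (of (fun i j => Complex.normSq (U i j)) *ᵥ s) := by
  have hdiag (i : ι) : (U * diagonal (fun j => (s j : ℂ)) * star U) i i =
      ((∑ j, Complex.normSq (U i j) * s j : ℝ) : ℂ) := by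
    rw [mul_apply]
    push_cast
    refine Finset.sum_congr rfl fun j _ => ?_
    rw [mul_diagonal, star_apply, RCLike.star_def, ← Complex.mul_conj]
    ring
  simp only [energy, trace, diag_apply, mul_diagonal, hdiag, Complex.re_sum, dotProduct, mulVec,
    of_apply]
  simp [mul_comm]

theorem isPassive_diagonal_iff_antivary {ε s : ι → ℝ} :
    IsPassive (diagonal fun i => (ε i : ℂ)) (diagonal fun i => (s i : ℂ)) ↔ Antivary s ε := by
  refine ⟨fun h i j hε => ?_, fun h U hU => ?_⟩
  · have hswap := h _ (permMatrix_mem_unitaryGroup (Equiv.swap i j))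
    rw [energy_diagonal_diagonal, energy_diagonal_conj, of_normSq_permMatrix, permMatrix_mulVec,
      ← sub_nonneg, dotProduct_comp_swap_sub ε s (ne_of_apply_ne ε hε.ne)] at hswap
    exact sub_nonneg.1 (nonneg_of_mul_nonneg_left hswap (sub_pos.2 hε))
  · rw [energy_diagonal_diagonal, energy_diagonal_conj]
    exact (antivary_comm.1 h).dotProduct_le_dotProduct_mulVec (of_normSq_mem_doublyStochastic hU)

theorem passive_iff_nonincreasing_general {d : ℕ} (ε s : Fin d → ℝ)
    (hε : StrictMono ε) :
    IsPassive (Matrix.diagonal fun j => (ε j : ℂ)) (Matrix.diagonal fun j => (s j : ℂ)) ↔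
      ∀ i j : Fin d, i ≤ j → s j ≤ s i :=
  isPassive_diagonal_iff_antivary.trans
    ⟨hε.trans_antivary, fun hs => Antitone.antivary (fun i j => hs i j) hε.monotone⟩

theorem passive_iff_nonincreasing {d : ℕ} (ε s : Fin d → ℝ)
    (hε : StrictMono ε)
    (hσ : IsDensity (Matrix.diagonal fun j => (s j : ℂ))) :
    IsPassive (Matrix.diagonal fun j => (ε j : ℂ)) (Matrix.diagonal fun j => (s j : ℂ)) ↔
      ∀ i j : Fin d, i ≤ j → s j ≤ s i :=
  passive_iff_nonincreasing_general ε s hε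
end
end

section
/- If ρ is a density matrix with S(ρ) = S(ω_β̄) for some β̄ > 0, then tr(ρH) ≥ tr(ω_β̄ H). -/
open Matrix BigOperators
open scoped Classical ComplexOrder

noncomputable section

/-!
Gibbs variational principle: for every density matrix `ρ`,
`S(ρ) - β tr(ρH) ≤ log Z` with `Z = ∑ⱼ exp(-β λⱼ)`, with equality at `ω_β`; at equal entropies
this leaves `β tr(ω_β H) ≤ β tr(ρH)`. Writing `ρ = ∑ pᵢ |vᵢ⟩⟨vᵢ|` and `H = ∑ λⱼ |uⱼ⟩⟨uⱼ|`,
the energy is `∑ pᵢ cᵢⱼ λⱼ` with `cᵢⱼ = |⟨vᵢ, uⱼ⟩|²` doubly stochastic, so the inequality reduces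
to the classical bound `∑ negMulLog pᵢ + ∑ pᵢ bᵢ ≤ log ∑ exp bᵢ` applied to `b = -β c λ`,
followed by Jensen for `exp` along the rows of `c`.
-/

open Real Unitary

section Classical

lemma negMulLog_add_mul_log_le {p t : ℝ} (hp : 0 ≤ p) (ht : 0 < t) :
    negMulLog p + p * log t ≤ t - p := by
  have h := negMulLog_le_one_sub_self (div_nonneg hp ht.le)
  rw [div_eq_mul_inv, negMulLog_mul] at h
  simp only [negMulLog, log_inv] at h ⊢
  have h' := mul_le_mul_of_nonneg_left h ht.le
  field_simp at h'
  linarith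

variable {ι : Type*} [Fintype ι]

lemma sum_negMulLog_add_sum_mul_le_log_sum_exp {p : ι → ℝ} (hp : ∀ i, 0 ≤ p i)
    (hp1 : ∑ i, p i = 1) (b : ι → ℝ) :
    ∑ i, negMulLog (p i) + ∑ i, p i * b i ≤ log (∑ i, exp (b i)) := by
  have hne : (Finset.univ : Finset ι).Nonempty :=
    Finset.nonempty_of_sum_ne_zero (by rw [hp1]; exact one_ne_zero)
  set Z := ∑ i, exp (b i)
  have hZ : 0 < Z := Finset.sum_pos (fun i _ => exp_pos _) hne
  have hterm (i : ι) : negMulLog (p i) + p i * b i ≤ exp (b i) / Z - p i + p i * log Z := by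
    have := negMulLog_add_mul_log_le (hp i) (div_pos (exp_pos (b i)) hZ)
    rw [log_div (exp_pos _).ne' hZ.ne', log_exp] at this
    linarith
  have hsum : ∑ i, exp (b i) / Z = 1 := by rw [← Finset.sum_div, div_self hZ.ne']
  calc ∑ i, negMulLog (p i) + ∑ i, p i * b i
      ≤ ∑ i, (exp (b i) / Z - p i + p i * log Z) := by
        rw [← Finset.sum_add_distrib]; exact Finset.sum_le_sum fun i _ => hterm i
    _ = log Z := by
        rw [Finset.sum_add_distrib, Finset.sum_sub_distrib, ← Finset.sum_mul, hsum, hp1]; ring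

variable [DecidableEq ι]

lemma sum_exp_mulVec_le_sum_exp {c : Matrix ι ι ℝ} (hc : c ∈ doublyStochastic ℝ ι) (a : ι → ℝ) :
    ∑ i, exp ((c *ᵥ a) i) ≤ ∑ i, exp (a i) := by
  calc ∑ i, exp ((c *ᵥ a) i) ≤ ∑ i, (c *ᵥ (exp ∘ a)) i := by
        refine Finset.sum_le_sum fun i _ => ?_
        simpa [mulVec, dotProduct, smul_eq_mul] using convexOn_exp.map_sum_le
          (t := Finset.univ) (w := c i) (p := a) (fun j _ => nonneg_of_mem_doublyStochastic hc)
          (sum_row_of_mem_doublyStochastic hc i) (fun j _ => Set.mem_univ _)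
    _ = ∑ i, exp (a i) := sum_mulVec_of_mem_doublyStochastic hc

lemma sum_negMulLog_sub_mul_dotProduct_mulVec_le {p : ι → ℝ} (hp : ∀ i, 0 ≤ p i)
    (hp1 : ∑ i, p i = 1) {c : Matrix ι ι ℝ} (hc : c ∈ doublyStochastic ℝ ι) (β : ℝ)
    (E : ι → ℝ) :
    ∑ i, negMulLog (p i) - β * (p ⬝ᵥ c *ᵥ E) ≤ log (∑ i, exp (-β * E i)) := by
  have hne : (Finset.univ : Finset ι).Nonempty :=
    Finset.nonempty_of_sum_ne_zero (by rw [hp1]; exact one_ne_zero)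
  calc ∑ i, negMulLog (p i) - β * (p ⬝ᵥ c *ᵥ E)
      = ∑ i, negMulLog (p i) + ∑ i, p i * (c *ᵥ (-β • E)) i := by
        rw [sub_eq_add_neg, mulVec_smul, dotProduct, Finset.mul_sum, ← Finset.sum_neg_distrib]
        congr 1
        exact Finset.sum_congr rfl fun i _ => by simp only [Pi.smul_apply, smul_eq_mul]; ring
    _ ≤ log (∑ i, exp ((c *ᵥ (-β • E)) i)) := sum_negMulLog_add_sum_mul_le_log_sum_exp hp hp1 _
    _ ≤ log (∑ i, exp (-β * E i)) :=
        log_le_log (Finset.sum_pos (fun i _ => exp_pos _) hne) (sum_exp_mulVec_le_sum_exp hc _)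

end Classical

section Quantum

variable {n : Type*} [Fintype n] [DecidableEq n]

lemma Matrix.trace_conjStarAlgAut (U : unitary (Matrix n n ℂ)) (A : Matrix n n ℂ) :
    trace (conjStarAlgAut ℂ _ U A) = trace A := by
  rw [conjStarAlgAut_apply, trace_mul_cycle, Unitary.coe_star_mul_self, one_mul]

lemma Matrix.map_normSq_mem_doublyStochastic (U : unitary (Matrix n n ℂ)) :
    (U : Matrix n n ℂ).map Complex.normSq ∈ doublyStochastic ℝ n := by
  have hrow (i : n) : ∑ j, Complex.normSq ((U : Matrix n n ℂ) i j) = 1 := by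
    have h := congrFun (congrFun (Unitary.coe_mul_star_self U) i) i
    simp only [Unitary.coe_star, mul_apply, star_apply, Complex.star_def, Complex.mul_conj,
      one_apply_eq] at h
    exact_mod_cast h
  have hcol (j : n) : ∑ i, Complex.normSq ((U : Matrix n n ℂ) i j) = 1 := by
    have h := congrFun (congrFun (Unitary.coe_star_mul_self U) j) j
    simp only [mul_apply, star_apply, Complex.star_def, mul_comm, Complex.mul_conj,
      one_apply_eq] at h
    exact_mod_cast h
  exact mem_doublyStochastic_iff_sum.mpr ⟨fun i j => Complex.normSq_nonneg _, hrow, hcol⟩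

lemma Matrix.mul_diagonal_mul_star_apply_self (W : Matrix n n ℂ) (l : n → ℝ) (i : n) :
    (W * diagonal (RCLike.ofReal ∘ l) * star W : Matrix n n ℂ) i i =
      ((W.map Complex.normSq *ᵥ l) i : ℂ) := by
  rw [mul_apply]
  simp only [mul_diagonal, star_apply, Complex.star_def, mulVec, dotProduct, map_apply,
    Function.comp_apply, Complex.coe_algebraMap]
  push_cast
  exact Finset.sum_congr rfl fun j _ => by rw [← Complex.mul_conj]; ring

lemma energy_conjStarAlgAut_diagonal (U V : unitary (Matrix n n ℂ)) (l p : n → ℝ) :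
    energy (conjStarAlgAut ℂ _ U (diagonal (RCLike.ofReal ∘ l)))
        (conjStarAlgAut ℂ _ V (diagonal (RCLike.ofReal ∘ p))) =
      p ⬝ᵥ ((star V * U : unitary (Matrix n n ℂ)) : Matrix n n ℂ).map Complex.normSq *ᵥ l := by
  have hU : conjStarAlgAut ℂ _ U (diagonal (RCLike.ofReal ∘ l)) =
      conjStarAlgAut ℂ _ V (conjStarAlgAut ℂ _ (star V * U) (diagonal (RCLike.ofReal ∘ l))) := by
    rw [← conjStarAlgAut_mul_apply, Unitary.star_eq_inv, mul_inv_cancel_left]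
  rw [energy, hU, ← map_mul, trace_conjStarAlgAut, conjStarAlgAut_apply]
  simp only [trace, diag_apply, diagonal_mul, mul_diagonal_mul_star_apply_self]
  simp [dotProduct, Complex.re_sum]

lemma vnEntropy_cfc {H : Matrix n n ℂ} (hH : H.IsHermitian) (f : ℝ → ℝ) :
    vnEntropy (cfc f H) = ∑ i, negMulLog (f (hH.eigenvalues i)) := by
  have hf : (cfc f H).IsHermitian := cfc_predicate f H
  have hroots : Finset.univ.val.map (RCLike.ofReal ∘ hf.eigenvalues) =
      Finset.univ.val.map (RCLike.ofReal ∘ f ∘ hH.eigenvalues : n → ℂ) := by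
    rw [← hf.roots_charpoly_eq_eigenvalues, hH.charpoly_cfc_eq f, Polynomial.roots_prod _ _
      (by simp [Finset.prod_ne_zero_iff, Polynomial.X_sub_C_ne_zero])]
    simp
  have hre := congrArg (fun s => ((s.map RCLike.re).map negMulLog).sum) hroots
  simp only [Multiset.map_map, Function.comp_def, RCLike.ofReal_re] at hre
  rw [vnEntropy, dif_pos hf, Finset.sum_eq_multiset_sum, Finset.sum_eq_multiset_sum]
  exact hre

lemma energy_cfc {H : Matrix n n ℂ} (hH : H.IsHermitian) (f : ℝ → ℝ) :
    energy H (cfc f H) = ∑ i, f (hH.eigenvalues i) * hH.eigenvalues i := by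
  rw [hH.cfc_eq f, IsHermitian.cfc]
  nth_rw 1 [hH.spectral_theorem]
  rw [energy_conjStarAlgAut_diagonal, Unitary.star_mul_self, OneMemClass.coe_one,
    Matrix.map_one _ Complex.normSq_zero Complex.normSq_one, one_mulVec]
  rfl

lemma Matrix.exp_conjStarAlgAut (U : unitary (Matrix n n ℂ)) (A : Matrix n n ℂ) :
    NormedSpace.exp (conjStarAlgAut ℂ _ U A) = conjStarAlgAut ℂ _ U (NormedSpace.exp A) :=
  Matrix.exp_units_conj (Unitary.toUnits U) A

lemma gibbs_eq_cfc {H : Matrix n n ℂ} (hH : H.IsHermitian) (β : ℝ) :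
    gibbs H β = cfc (fun x => exp (-β * x) / ∑ j, exp (-β * hH.eigenvalues j)) H := by
  have hexp : NormedSpace.exp ((-β : ℂ) • H) =
      conjStarAlgAut ℂ _ hH.eigenvectorUnitary
        (diagonal (RCLike.ofReal ∘ fun i => exp (-β * hH.eigenvalues i))) := by
    nth_rw 1 [hH.spectral_theorem]
    rw [← map_smul, exp_conjStarAlgAut, ← diagonal_smul, exp_diagonal]
    congr 2
    funext i
    rw [Pi.coe_exp, ← Complex.exp_eq_exp_ℂ]
    simp
  have htrace : trace (NormedSpace.exp ((-β : ℂ) • H)) = ↑(∑ j, exp (-β * hH.eigenvalues j)) := by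
    rw [hexp, trace_conjStarAlgAut, trace_diagonal]
    simp
  rw [gibbs, htrace, hexp, hH.cfc_eq, IsHermitian.cfc, ← map_smul, ← diagonal_smul]
  congr 2
  funext i
  simp [div_eq_inv_mul]

lemma vnEntropy_gibbs_sub_mul_energy {H : Matrix n n ℂ} (hH : H.IsHermitian) (β : ℝ) :
    vnEntropy (gibbs H β) - β * energy H (gibbs H β) =
      log (∑ j, exp (-β * hH.eigenvalues j)) := by
  rw [gibbs_eq_cfc hH, vnEntropy_cfc hH, energy_cfc hH, Finset.mul_sum, ← Finset.sum_sub_distrib]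
  set Z := ∑ j, exp (-β * hH.eigenvalues j)
  rcases isEmpty_or_nonempty n with hn | hn
  · simp [Z]
  have hZ : 0 < Z := Finset.sum_pos (fun j _ => exp_pos _) Finset.univ_nonempty
  have hterm (i : n) : negMulLog (exp (-β * hH.eigenvalues i) / Z) -
      β * (exp (-β * hH.eigenvalues i) / Z * hH.eigenvalues i) =
      exp (-β * hH.eigenvalues i) / Z * log Z := by
    rw [negMulLog, log_div (exp_pos _).ne' hZ.ne', log_exp]
    ring
  rw [Finset.sum_congr rfl fun i _ => hterm i, ← Finset.sum_mul, ← Finset.sum_div,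
    div_self hZ.ne', one_mul]

lemma vnEntropy_sub_mul_energy_le {H ρ : Matrix n n ℂ} (hH : H.IsHermitian) (hρ : IsDensity ρ)
    (β : ℝ) : vnEntropy ρ - β * energy H ρ ≤ log (∑ j, exp (-β * hH.eigenvalues j)) := by
  obtain ⟨hρpos, htr⟩ := hρ
  have hρH := hρpos.isHermitian
  have hE := energy_conjStarAlgAut_diagonal hH.eigenvectorUnitary hρH.eigenvectorUnitary
    hH.eigenvalues hρH.eigenvalues
  rw [← hH.spectral_theorem, ← hρH.spectral_theorem] at hE
  have hsum : ∑ i, hρH.eigenvalues i = 1 := by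
    rw [hρH.trace_eq_sum_eigenvalues] at htr
    simpa using congrArg RCLike.re htr
  rw [vnEntropy, dif_pos hρH, hE]
  exact sum_negMulLog_sub_mul_dotProduct_mulVec_le hρpos.eigenvalues_nonneg hsum
    (map_normSq_mem_doublyStochastic _) β _

lemma vnEntropy_sub_mul_energy_le_gibbs {H ρ : Matrix n n ℂ} (hH : H.IsHermitian)
    (hρ : IsDensity ρ) (β : ℝ) :
    vnEntropy ρ - β * energy H ρ ≤ vnEntropy (gibbs H β) - β * energy H (gibbs H β) :=
  (vnEntropy_sub_mul_energy_le hH hρ β).trans_eq (vnEntropy_gibbs_sub_mul_energy hH β).symm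

end Quantum

theorem energy_ge_gibbs_of_entropy_eq {d : ℕ} (H ρ : Matrix (Fin d) (Fin d) ℂ)
    (hH : H.IsHermitian) (hρ : IsDensity ρ) (β : ℝ) (hβ : 0 < β)
    (hS : vnEntropy ρ = vnEntropy (gibbs H β)) :
    energy H (gibbs H β) ≤ energy H ρ := by
  have hfree := vnEntropy_sub_mul_energy_le_gibbs hH hρ β
  rw [hS, sub_le_sub_iff_left] at hfree
  exact le_of_mul_le_mul_left hfree hβ

end
end

section
/- Thermodynamical bound on ergotropy: for a density matrix ρ with S(ρ) = S(ω_β̄), the maximal extractable work W_max := tr(ρH) − min_U tr(UρU†H) satisfies W_max ≤ tr(ρH) − tr(ω_β̄ H). -/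
open Matrix BigOperators
open scoped Classical ComplexOrder

noncomputable section

/-! The eigenbasis of `H` turns the problem into a classical one. If `ρ = W diag(p) W†` and `V`
diagonalises `H`, the energy of `UρU†` is `⟪c p, E⟫`, where `c = |V† U W|²` (entrywise) is doubly
stochastic. Entropy does not decrease under doubly stochastic maps (concavity of `x ↦ -x log x`),
and Gibbs' inequality against the weights `q = e^{-βE} / Z` gives `S(c p) ≤ β ⟪c p, E⟫ + log Z`,
with equality at `ω_β`. Hence `S(σ) - β E(σ) ≤ S(ω_β) - β E(ω_β)` for every state `σ`; as every
`UρU†` has the entropy of `ω_β̄` and `β̄ > 0`, its energy is at least that of `ω_β̄`. -/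

namespace Real

lemma negMulLog_le_neg_mul_log_add_sub {r q : ℝ} (hr : 0 ≤ r) (hq : 0 < q) :
    negMulLog r ≤ -(r * log q) + (q - r) := by
  have hsplit : negMulLog r = q * negMulLog (r / q) - r * log q := by
    have := negMulLog_mul (r / q) q
    rw [div_mul_cancel₀ r hq.ne'] at this
    rw [this, show negMulLog q = -q * log q from rfl]
    field_simp
    ring
  have hle : q * negMulLog (r / q) ≤ q - r := by
    calc q * negMulLog (r / q) ≤ q * (1 - r / q) :=
          mul_le_mul_of_nonneg_left (negMulLog_le_one_sub_self (by positivity)) hq.le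
      _ = q - r := by field_simp
  linarith

end Real

section Classical

open Real

variable {ι : Type*} [Fintype ι]

theorem sum_negMulLog_le_neg_sum_mul_log {r q : ι → ℝ} (hr : ∀ i, 0 ≤ r i)
    (hq : ∀ i, 0 < q i) (hsum : ∑ i, r i = ∑ i, q i) :
    ∑ i, negMulLog (r i) ≤ -∑ i, r i * log (q i) := by
  calc ∑ i, negMulLog (r i) ≤ ∑ i, (-(r i * log (q i)) + (q i - r i)) :=
        Finset.sum_le_sum fun i _ => negMulLog_le_neg_mul_log_add_sub (hr i) (hq i)
    _ = -∑ i, r i * log (q i) := by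
        rw [Finset.sum_add_distrib, Finset.sum_sub_distrib, hsum, sub_self, add_zero,
          Finset.sum_neg_distrib]

theorem sum_negMulLog_le_sum_negMulLog_mulVec [DecidableEq ι] {c : Matrix ι ι ℝ}
    (hc : c ∈ doublyStochastic ℝ ι) {p : ι → ℝ} (hp : ∀ i, 0 ≤ p i) :
    ∑ i, negMulLog (p i) ≤ ∑ j, negMulLog ((c *ᵥ p) j) := by
  have jensen : ∀ j, ∑ i, c j i * negMulLog (p i) ≤ negMulLog ((c *ᵥ p) j) := fun j =>
    concaveOn_negMulLog.le_map_sum (fun i _ => nonneg_of_mem_doublyStochastic hc)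
      (sum_row_of_mem_doublyStochastic hc j) (fun i _ => Set.mem_Ici.mpr (hp i))
  calc ∑ i, negMulLog (p i) = ∑ j, ∑ i, c j i * negMulLog (p i) := by
        rw [Finset.sum_comm]
        simp_rw [← Finset.sum_mul, sum_col_of_mem_doublyStochastic hc, one_mul]
    _ ≤ ∑ j, negMulLog ((c *ᵥ p) j) := Finset.sum_le_sum fun j _ => jensen j

def partitionFunction (E : ι → ℝ) (β : ℝ) : ℝ :=
  ∑ i, exp (-β * E i)

def gibbsWeights (E : ι → ℝ) (β : ℝ) (i : ι) : ℝ :=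
  exp (-β * E i) / partitionFunction E β

variable [Nonempty ι] (E : ι → ℝ) (β : ℝ)

lemma partitionFunction_pos : 0 < partitionFunction E β :=
  Finset.sum_pos (fun _ _ => exp_pos _) Finset.univ_nonempty

lemma gibbsWeights_pos (i : ι) : 0 < gibbsWeights E β i :=
  div_pos (exp_pos _) (partitionFunction_pos E β)

lemma sum_gibbsWeights : ∑ i, gibbsWeights E β i = 1 := by
  simp_rw [gibbsWeights]
  rw [← Finset.sum_div]
  exact div_self (partitionFunction_pos E β).ne'

lemma neg_sum_mul_log_gibbsWeights (r : ι → ℝ) :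
    -∑ i, r i * log (gibbsWeights E β i) =
      β * (r ⬝ᵥ E) + log (partitionFunction E β) * ∑ i, r i := by
  have hlog : ∀ i, log (gibbsWeights E β i) = -β * E i - log (partitionFunction E β) := fun i => by
    rw [gibbsWeights, log_div (exp_ne_zero _) (partitionFunction_pos E β).ne', log_exp]
  simp only [hlog, dotProduct, Finset.mul_sum, ← Finset.sum_neg_distrib,
    ← Finset.sum_add_distrib]
  exact Finset.sum_congr rfl fun i _ => by ring

lemma sum_negMulLog_gibbsWeights :
    ∑ i, negMulLog (gibbsWeights E β i) =
      β * (gibbsWeights E β ⬝ᵥ E) + log (partitionFunction E β) := by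
  rw [← mul_one (log _), ← sum_gibbsWeights E β, ← neg_sum_mul_log_gibbsWeights,
    ← Finset.sum_neg_distrib, negMulLog_eq_neg]

lemma sum_negMulLog_le_mul_dotProduct_add_log_partitionFunction {r : ι → ℝ}
    (hr : ∀ i, 0 ≤ r i) (hr1 : ∑ i, r i = 1) :
    ∑ i, negMulLog (r i) ≤ β * (r ⬝ᵥ E) + log (partitionFunction E β) := by
  calc ∑ i, negMulLog (r i) ≤ -∑ i, r i * log (gibbsWeights E β i) :=
        sum_negMulLog_le_neg_sum_mul_log hr (gibbsWeights_pos E β)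
          (by rw [hr1, sum_gibbsWeights])
    _ = β * (r ⬝ᵥ E) + log (partitionFunction E β) := by
        rw [neg_sum_mul_log_gibbsWeights, hr1, mul_one]

end Classical

namespace Matrix

variable {𝕜 ι : Type*} [RCLike 𝕜] [Fintype ι] [DecidableEq ι]

lemma map_norm_sq_mem_doublyStochastic {M : Matrix ι ι 𝕜} (hM : M ∈ unitaryGroup ι 𝕜) :
    M.map (fun z => ‖z‖ ^ 2) ∈ doublyStochastic ℝ ι := by
  refine mem_doublyStochastic_iff_sum.mpr ⟨fun i j => sq_nonneg _, fun i => ?_, fun j => ?_⟩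
  · have h : (M * star M) i i = 1 := by rw [Unitary.mul_star_self_of_mem hM, one_apply_eq]
    simp only [mul_apply, star_apply, RCLike.star_def, RCLike.mul_conj] at h
    exact_mod_cast h
  · have h : (star M * M) j j = 1 := by rw [Unitary.star_mul_self_of_mem hM, one_apply_eq]
    simp only [mul_apply, star_apply, RCLike.star_def, RCLike.conj_mul] at h
    exact_mod_cast h

lemma charpoly_unitary_conj {U : Matrix ι ι 𝕜} (hU : U ∈ unitaryGroup ι 𝕜) (A : Matrix ι ι 𝕜) :
    (U * A * star U).charpoly = A.charpoly := by
  rw [charpoly_mul_comm, ← Matrix.mul_assoc, Unitary.star_mul_self_of_mem hU, Matrix.one_mul]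

lemma IsHermitian.eq_eigenvectorUnitary_mul_diagonal_mul_star {A : Matrix ι ι 𝕜}
    (hA : A.IsHermitian) :
    A = (hA.eigenvectorUnitary : Matrix ι ι 𝕜) * diagonal (RCLike.ofReal ∘ hA.eigenvalues) *
      star (hA.eigenvectorUnitary : Matrix ι ι 𝕜) :=
  hA.spectral_theorem

lemma IsHermitian.map_eigenvalues_eq_of_eq_unitary_conj_diagonal {A U : Matrix ι ι 𝕜}
    (hA : A.IsHermitian) (hU : U ∈ unitaryGroup ι 𝕜) {p : ι → ℝ}
    (h : A = U * diagonal (RCLike.ofReal ∘ p) * star U) :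
    Finset.univ.val.map hA.eigenvalues = Finset.univ.val.map p := by
  have hroots : A.charpoly.roots = Finset.univ.val.map (RCLike.ofReal ∘ p) := by
    rw [h, charpoly_unitary_conj hU, charpoly_diagonal, Finset.prod_eq_multiset_prod,
      ← Polynomial.roots_multiset_prod_X_sub_C (Finset.univ.val.map (RCLike.ofReal ∘ p)),
      Multiset.map_map]
    rfl
  rw [hA.roots_charpoly_eq_eigenvalues, ← Multiset.map_map, ← Multiset.map_map] at hroots
  exact Multiset.map_injective RCLike.ofReal_injective hroots

end Matrix

section Quantum

open Real

variable {ι : Type*} [Fintype ι] [DecidableEq ι] {H ρ U : Matrix ι ι ℂ}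

lemma energy_unitary_conj_diagonal (hH : H.IsHermitian) (W : Matrix ι ι ℂ) (p : ι → ℝ) :
    energy H (W * diagonal (RCLike.ofReal ∘ p) * star W) =
      ((star (hH.eigenvectorUnitary : Matrix ι ι ℂ) * W).map (fun z => ‖z‖ ^ 2) *ᵥ p) ⬝ᵥ
        hH.eigenvalues := by
  set V : Matrix ι ι ℂ := ↑hH.eigenvectorUnitary
  set M := star V * W
  have hconj : star W * H * W = star M * diagonal (RCLike.ofReal ∘ hH.eigenvalues) * M := by
    conv_lhs => rw [hH.eq_eigenvectorUnitary_mul_diagonal_mul_star]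
    simp only [M, V, star_mul, star_star, Matrix.mul_assoc]
  have htrace : (W * diagonal (RCLike.ofReal ∘ p) * star W * H).trace =
      (diagonal (RCLike.ofReal ∘ p) * (star W * H * W)).trace := by
    simp only [Matrix.mul_assoc]
    rw [trace_mul_comm W]
    simp only [Matrix.mul_assoc]
  have hdiag : ∀ i, (star W * H * W) i i = ∑ j, ((‖M j i‖ ^ 2 * hH.eigenvalues j : ℝ) : ℂ) := by
    intro i
    rw [hconj, mul_apply]
    refine Finset.sum_congr rfl fun j _ => ?_
    rw [mul_diagonal, star_apply, RCLike.star_def, mul_comm _ (M j i), ← mul_assoc,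
      RCLike.mul_conj, Function.comp_apply]
    push_cast
    rfl
  rw [energy, htrace, trace]
  simp only [diag_apply, diagonal_mul, hdiag, Function.comp_apply]
  simp only [RCLike.ofReal_eq_complex_ofReal, ← Complex.ofReal_sum, ← Complex.ofReal_mul,
    Complex.ofReal_re, mulVec, dotProduct, map_apply, Finset.mul_sum, Finset.sum_mul]
  rw [Finset.sum_comm]
  exact Finset.sum_congr rfl fun i _ => Finset.sum_congr rfl fun j _ => by ring

lemma vnEntropy_unitary_conj_diagonal (hU : U ∈ unitaryGroup ι ℂ) (p : ι → ℝ) :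
    vnEntropy (U * diagonal (RCLike.ofReal ∘ p) * star U) = ∑ i, negMulLog (p i) := by
  have hA : (U * diagonal (RCLike.ofReal ∘ p) * star U).IsHermitian :=
    isHermitian_mul_mul_conjTranspose U
      (isHermitian_diagonal_of_self_adjoint _ (funext fun i => RCLike.conj_ofReal (p i)))
  rw [vnEntropy, dif_pos hA]
  simpa only [Multiset.map_map, Function.comp_def, ← Finset.sum_eq_multiset_sum] using
    congrArg (fun m => (m.map negMulLog).sum)
      (hA.map_eigenvalues_eq_of_eq_unitary_conj_diagonal hU rfl)

lemma vnEntropy_unitary_conj (hρ : ρ.IsHermitian) (hU : U ∈ unitaryGroup ι ℂ) :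
    vnEntropy (U * ρ * star U) = vnEntropy ρ := by
  have hconj : U * ρ * star U = (U * (hρ.eigenvectorUnitary : Matrix ι ι ℂ)) *
      diagonal (RCLike.ofReal ∘ hρ.eigenvalues) *
        star (U * (hρ.eigenvectorUnitary : Matrix ι ι ℂ)) := by
    conv_lhs => rw [hρ.eq_eigenvectorUnitary_mul_diagonal_mul_star]
    simp only [star_mul, Matrix.mul_assoc]
  rw [hconj, vnEntropy_unitary_conj_diagonal (mul_mem hU hρ.eigenvectorUnitary.2), vnEntropy,
    dif_pos hρ]

lemma IsDensity.unitary_conj (hρ : IsDensity ρ) (hU : U ∈ unitaryGroup ι ℂ) :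
    IsDensity (U * ρ * star U) :=
  ⟨hρ.1.mul_mul_conjTranspose_same U, by
    rw [trace_mul_cycle, Unitary.star_mul_self_of_mem hU, Matrix.one_mul, hρ.2]⟩

lemma IsDensity.nonempty (hρ : IsDensity ρ) : Nonempty ι := by
  by_contra h
  rw [not_nonempty_iff] at h
  simpa [trace] using hρ.2

lemma IsDensity.sum_eigenvalues (hρ : IsDensity ρ) : ∑ i, hρ.1.1.eigenvalues i = 1 := by
  apply RCLike.ofReal_injective (K := ℂ)
  rw [RCLike.ofReal_sum, RCLike.ofReal_one, ← hρ.1.1.trace_eq_sum_eigenvalues]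
  exact hρ.2

lemma exp_smul_eq_unitary_conj_diagonal (hH : H.IsHermitian) (t : ℝ) :
    NormedSpace.exp ((t : ℂ) • H) = (hH.eigenvectorUnitary : Matrix ι ι ℂ) *
      diagonal (RCLike.ofReal ∘ fun i => exp (t * hH.eigenvalues i)) *
        star (hH.eigenvectorUnitary : Matrix ι ι ℂ) := by
  set V : Matrix ι ι ℂ := ↑hH.eigenvectorUnitary
  have hVinv : V⁻¹ = star V :=
    inv_eq_left_inv (Unitary.star_mul_self_of_mem hH.eigenvectorUnitary.2)
  have hdiag : (diagonal (RCLike.ofReal ∘ fun i => t * hH.eigenvalues i) : Matrix ι ι ℂ) =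
      (t : ℂ) • diagonal (RCLike.ofReal ∘ hH.eigenvalues) := by
    rw [← diagonal_smul]
    congr 1
    ext i
    simp
  have hsmul : (t : ℂ) • H =
      V * diagonal (RCLike.ofReal ∘ fun i => t * hH.eigenvalues i) * V⁻¹ := by
    conv_lhs => rw [hH.eq_eigenvectorUnitary_mul_diagonal_mul_star]
    rw [hVinv, hdiag, Matrix.mul_smul, Matrix.smul_mul]
  rw [hsmul, exp_conj _ _ Unitary.isUnit_coe, exp_diagonal, hVinv]
  congr 3
  ext i
  simp [← Complex.exp_eq_exp_ℂ]

lemma gibbs_eq_unitary_conj_diagonal (hH : H.IsHermitian) (β : ℝ) :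
    gibbs H β = (hH.eigenvectorUnitary : Matrix ι ι ℂ) *
      diagonal (RCLike.ofReal ∘ gibbsWeights hH.eigenvalues β) *
        star (hH.eigenvectorUnitary : Matrix ι ι ℂ) := by
  have hexp := exp_smul_eq_unitary_conj_diagonal hH (-β)
  rw [Complex.ofReal_neg] at hexp
  have htrace : (NormedSpace.exp ((-β : ℂ) • H)).trace =
      (partitionFunction hH.eigenvalues β : ℂ) := by
    rw [hexp, trace_mul_cycle, Unitary.star_mul_self_of_mem hH.eigenvectorUnitary.2,
      Matrix.one_mul, trace_diagonal, partitionFunction]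
    simp
  have hdiag : (partitionFunction hH.eigenvalues β : ℂ)⁻¹ •
      (diagonal (RCLike.ofReal ∘ fun i => exp (-β * hH.eigenvalues i)) : Matrix ι ι ℂ) =
      diagonal (RCLike.ofReal ∘ gibbsWeights hH.eigenvalues β) := by
    rw [← diagonal_smul]
    congr 1
    ext i
    simp [gibbsWeights, div_eq_inv_mul]
  rw [gibbs, htrace, hexp, ← hdiag, Matrix.mul_smul, Matrix.smul_mul]

lemma vnEntropy_gibbs [Nonempty ι] (hH : H.IsHermitian) (β : ℝ) :
    vnEntropy (gibbs H β) =
      β * energy H (gibbs H β) + log (partitionFunction hH.eigenvalues β) := by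
  rw [gibbs_eq_unitary_conj_diagonal hH β,
    vnEntropy_unitary_conj_diagonal hH.eigenvectorUnitary.2, energy_unitary_conj_diagonal hH,
    Unitary.star_mul_self_of_mem hH.eigenvectorUnitary.2, sum_negMulLog_gibbsWeights]
  simp

theorem vnEntropy_le_mul_energy_add_log_partitionFunction (hH : H.IsHermitian)
    (hρ : IsDensity ρ) (β : ℝ) :
    vnEntropy ρ ≤ β * energy H ρ + log (partitionFunction hH.eigenvalues β) := by
  have := hρ.nonempty
  have hρH : ρ.IsHermitian := hρ.1.1
  set p := hρH.eigenvalues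
  have hp : ∀ i, 0 ≤ p i := hρ.1.eigenvalues_nonneg
  set c := (star (hH.eigenvectorUnitary : Matrix ι ι ℂ) * hρH.eigenvectorUnitary).map
    (fun z => ‖z‖ ^ 2)
  have hc : c ∈ doublyStochastic ℝ ι := map_norm_sq_mem_doublyStochastic
    (mul_mem (Unitary.star_mem hH.eigenvectorUnitary.2) hρH.eigenvectorUnitary.2)
  have henergy : energy H ρ = (c *ᵥ p) ⬝ᵥ hH.eigenvalues := by
    conv_lhs => rw [hρH.eq_eigenvectorUnitary_mul_diagonal_mul_star]
    exact energy_unitary_conj_diagonal hH _ _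
  rw [vnEntropy, dif_pos hρH, henergy]
  calc ∑ i, negMulLog (p i) ≤ ∑ j, negMulLog ((c *ᵥ p) j) :=
        sum_negMulLog_le_sum_negMulLog_mulVec hc hp
    _ ≤ β * ((c *ᵥ p) ⬝ᵥ hH.eigenvalues) + log (partitionFunction hH.eigenvalues β) :=
        sum_negMulLog_le_mul_dotProduct_add_log_partitionFunction _ β
          (fun j => Finset.sum_nonneg fun i _ =>
            mul_nonneg (nonneg_of_mem_doublyStochastic hc) (hp i))
          (by rw [sum_mulVec_of_mem_doublyStochastic hc, hρ.sum_eigenvalues])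

theorem energy_gibbs_le_of_vnEntropy_eq (hH : H.IsHermitian) {β : ℝ} (hβ : 0 < β)
    (hρ : IsDensity ρ) (hS : vnEntropy (gibbs H β) = vnEntropy ρ) :
    energy H (gibbs H β) ≤ energy H ρ := by
  have := hρ.nonempty
  have hvar := vnEntropy_le_mul_energy_add_log_partitionFunction hH hρ β
  rw [← hS, vnEntropy_gibbs hH β, add_le_add_iff_right] at hvar
  exact le_of_mul_le_mul_left hvar hβ

end Quantum

theorem ergotropy_thermo_bound_general {d : ℕ} (H ρ : Matrix (Fin d) (Fin d) ℂ)
    (hH : H.IsHermitian)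
    (hρ : IsDensity ρ) (β : ℝ) (hβ : 0 < β)
    (hS : vnEntropy (gibbs H β) = vnEntropy ρ) :
    energy H ρ -
        sInf {x : ℝ | ∃ U ∈ Matrix.unitaryGroup (Fin d) ℂ, x = energy H (U * ρ * star U)} ≤
      energy H ρ - energy H (gibbs H β) := by
  refine sub_le_sub_left (le_csInf ?_ ?_) _
  · exact ⟨_, 1, one_mem _, rfl⟩
  rintro _ ⟨U, hU, rfl⟩
  exact energy_gibbs_le_of_vnEntropy_eq hH hβ (hρ.unitary_conj hU)
    (hS.trans (vnEntropy_unitary_conj hρ.1.1 hU).symm)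

theorem ergotropy_thermo_bound {d : ℕ} (H ρ : Matrix (Fin d) (Fin d) ℂ)
    (hH : H.IsHermitian) (hsimple : Function.Injective hH.eigenvalues)
    (hρ : IsDensity ρ) (β : ℝ) (hβ : 0 < β)
    (hS : vnEntropy (gibbs H β) = vnEntropy ρ) :
    energy H ρ -
        sInf {x : ℝ | ∃ U ∈ Matrix.unitaryGroup (Fin d) ℂ, x = energy H (U * ρ * star U)} ≤
      energy H ρ - energy H (gibbs H β) :=
  ergotropy_thermo_bound_general H ρ hH hρ β hβ hS
end
end

section
/- A Gibbs state ω_β (β ≥ 0) is passive: tr(ω_β H) ≤ tr(U ω_β U† H) for every unitary U. -/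
open Matrix BigOperators
open scoped Classical ComplexOrder

noncomputable section

/-
Diagonalise H = V diag(E) V†, so that ω_β = Z⁻¹ V diag(e^{-βE}) V†. For a unitary U put
W = V† U V; the energy of U ω_β U† is Z⁻¹ ∑ᵢⱼ |Wᵢⱼ|² e^{-βEⱼ} Eᵢ, and P = (|Wᵢⱼ|²) is doubly
stochastic. Hence the energy gain is Z⁻¹ ∑ᵢⱼ Pᵢⱼ e^{-βEⱼ} (Eᵢ - Eⱼ), and the tangent-line bound
e^{-βEⱼ} · (-β (Eᵢ - Eⱼ)) ≤ e^{-βEᵢ} - e^{-βEⱼ}, summed against P, shows that β times this gain is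
at least -∑ᵢⱼ Pᵢⱼ (e^{-βEᵢ} - e^{-βEⱼ}) = 0 (at β = 0 the gain is ∑ᵢⱼ Pᵢⱼ (Eᵢ - Eⱼ) = 0).
-/

section Energy

variable {ι : Type*} [Fintype ι]

lemma energy_ofReal_smul (H ρ : Matrix ι ι ℂ) (c : ℝ) :
    energy H ((c : ℂ) • ρ) = c * energy H ρ := by
  rw [energy, energy, Matrix.smul_mul, trace_smul, smul_eq_mul, Complex.re_ofReal_mul]

lemma trace_unitary_conj [DecidableEq ι] {V : Matrix ι ι ℂ} (hV : V ∈ unitaryGroup ι ℂ)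
    (A : Matrix ι ι ℂ) : (V * A * star V).trace = A.trace := by
  rw [trace_mul_cycle, Unitary.star_mul_self_of_mem hV, one_mul]

lemma energy_unitary_conj [DecidableEq ι] {V : Matrix ι ι ℂ} (hV : V ∈ unitaryGroup ι ℂ)
    (H ρ : Matrix ι ι ℂ) : energy (V * H * star V) (V * ρ * star V) = energy H ρ := by
  have hconj : V * ρ * star V * (V * H * star V) = V * (ρ * H) * star V := by
    simp only [mul_assoc, Unitary.star_mul_self_of_mem hV, ← mul_assoc (star V) V, one_mul]
  rw [energy, energy, hconj, trace_unitary_conj hV]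

lemma energy_diagonal_diagonal_s10 [DecidableEq ι] (E g : ι → ℝ) :
    energy (diagonal fun i => (E i : ℂ)) (diagonal fun i => (g i : ℂ)) = ∑ i, g i * E i := by
  simp [energy, diagonal_mul_diagonal, trace_diagonal, Complex.re_sum]

lemma energy_diagonal_conj_diagonal [DecidableEq ι] (E g : ι → ℝ) (W : Matrix ι ι ℂ) :
    energy (diagonal fun i => (E i : ℂ)) (W * diagonal (fun j => (g j : ℂ)) * star W)
      = ∑ i, ∑ j, Complex.normSq (W i j) * g j * E i := by
  simp only [energy, trace, diag_apply, mul_diagonal]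
  simp only [mul_apply, star_apply, diagonal_apply, mul_ite, mul_zero, Finset.sum_ite_eq',
    Finset.mem_univ, if_true, Finset.sum_mul, Complex.re_sum]
  refine Finset.sum_congr rfl fun i _ => Finset.sum_congr rfl fun j _ => ?_
  rw [RCLike.star_def, mul_right_comm (W i j), Complex.mul_conj]
  norm_cast

end Energy

section DoublyStochastic

variable {ι : Type*} [Fintype ι] [DecidableEq ι] {P : Matrix ι ι ℝ}

lemma normSq_mem_doublyStochastic {W : Matrix ι ι ℂ} (hW : W ∈ unitaryGroup ι ℂ) :
    (of fun i j => Complex.normSq (W i j)) ∈ doublyStochastic ℝ ι := by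
  have hrow : ∀ i, ∑ j, W i j * star (W i j) = 1 := fun i => by
    simpa [mul_apply] using congrArg (fun M => M i i) (mem_unitaryGroup_iff.mp hW)
  have hcol : ∀ j, ∑ i, star (W i j) * W i j = 1 := fun j => by
    simpa [mul_apply] using congrArg (fun M => M j j) (mem_unitaryGroup_iff'.mp hW)
  refine mem_doublyStochastic_iff_sum.2
    ⟨fun i j => Complex.normSq_nonneg _, fun i => ?_, fun j => ?_⟩
  · exact_mod_cast (by simpa [Complex.mul_conj] using hrow i :
      ((∑ j, Complex.normSq (W i j) : ℝ) : ℂ) = 1)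
  · exact_mod_cast (by simpa [← Complex.normSq_eq_conj_mul_self] using hcol j :
      ((∑ i, Complex.normSq (W i j) : ℝ) : ℂ) = 1)

lemma sum_sum_mul_eq_sum_of_mem_doublyStochastic (hP : P ∈ doublyStochastic ℝ ι) (h : ι → ℝ) :
    ∑ i, ∑ j, P i j * h j = ∑ j, h j :=
  sum_mulVec_of_mem_doublyStochastic hP

lemma sum_sum_mul_sub_eq_zero_of_mem_doublyStochastic (hP : P ∈ doublyStochastic ℝ ι)
    (h : ι → ℝ) : ∑ i, ∑ j, P i j * (h i - h j) = 0 := by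
  simp only [mul_sub, Finset.sum_sub_distrib, ← Finset.sum_mul, sum_row_of_mem_doublyStochastic hP,
    one_mul, sum_sum_mul_eq_sum_of_mem_doublyStochastic hP, sub_self]

lemma sum_exp_mul_le_of_mem_doublyStochastic (hP : P ∈ doublyStochastic ℝ ι) (E : ι → ℝ)
    {β : ℝ} (hβ : 0 ≤ β) :
    ∑ j, Real.exp (-β * E j) * E j ≤ ∑ i, ∑ j, P i j * Real.exp (-β * E j) * E i := by
  have tangent : ∀ i j, Real.exp (-β * E j) * (-β * (E i - E j))
      ≤ Real.exp (-β * E i) - Real.exp (-β * E j) := fun i j => by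
    have h := mul_le_mul_of_nonneg_left (Real.add_one_le_exp (-β * (E i - E j)))
      (Real.exp_pos (-β * E j)).le
    rw [← Real.exp_add, show -β * E j + -β * (E i - E j) = -β * E i by ring] at h
    linarith
  have gap : 0 ≤ ∑ i, ∑ j, P i j * (Real.exp (-β * E j) * (E i - E j)) := by
    rcases hβ.eq_or_lt with rfl | hβ
    · simpa using (sum_sum_mul_sub_eq_zero_of_mem_doublyStochastic hP E).ge
    have h : ∑ i, ∑ j, P i j * (Real.exp (-β * E j) * (-β * (E i - E j)))
        ≤ ∑ i, ∑ j, P i j * (Real.exp (-β * E i) - Real.exp (-β * E j)) := by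
      gcongr with i _ j _
      · exact nonneg_of_mem_doublyStochastic hP
      · exact tangent i j
    rw [sum_sum_mul_sub_eq_zero_of_mem_doublyStochastic hP] at h
    refine nonneg_of_mul_nonpos_right (le_of_eq_of_le ?_ h) (neg_neg_of_pos hβ)
    simp only [Finset.mul_sum]
    exact Finset.sum_congr rfl fun i _ => Finset.sum_congr rfl fun j _ => by ring
  calc ∑ j, Real.exp (-β * E j) * E j
      = ∑ i, ∑ j, P i j * (Real.exp (-β * E j) * E j) :=
        (sum_sum_mul_eq_sum_of_mem_doublyStochastic hP _).symm
    _ ≤ ∑ i, ∑ j, P i j * (Real.exp (-β * E j) * E j)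
          + ∑ i, ∑ j, P i j * (Real.exp (-β * E j) * (E i - E j)) := le_add_of_nonneg_right gap
    _ = ∑ i, ∑ j, P i j * Real.exp (-β * E j) * E i := by
        simp only [← Finset.sum_add_distrib]
        exact Finset.sum_congr rfl fun i _ => Finset.sum_congr rfl fun j _ => by ring

end DoublyStochastic

section Passivity

variable {ι : Type*} [Fintype ι] [DecidableEq ι]

lemma IsPassive.ofReal_smul {H σ : Matrix ι ι ℂ} (h : IsPassive H σ) {c : ℝ} (hc : 0 ≤ c) :
    IsPassive H ((c : ℂ) • σ) := fun U hU => by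
  rw [mul_smul_comm, smul_mul_assoc, energy_ofReal_smul, energy_ofReal_smul]
  exact mul_le_mul_of_nonneg_left (h U hU) hc

lemma IsPassive.unitary_conj {H σ : Matrix ι ι ℂ} (h : IsPassive H σ) {V : Matrix ι ι ℂ}
    (hV : V ∈ unitaryGroup ι ℂ) : IsPassive (V * H * star V) (V * σ * star V) := fun U hU => by
  set W := star V * U * V
  have hW : W ∈ unitaryGroup ι ℂ := mul_mem (mul_mem (Unitary.star_mem hV) hU) hV
  have hconj : U * (V * σ * star V) * star U = V * (W * σ * star W) * star V := by
    simp only [W, star_mul, star_star, mul_assoc, Unitary.mul_star_self_of_mem hV, mul_one,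
      ← mul_assoc V (star V), one_mul]
  rw [hconj, energy_unitary_conj hV, energy_unitary_conj hV]
  exact h W hW

lemma isPassive_diagonal_exp (E : ι → ℝ) {β : ℝ} (hβ : 0 ≤ β) :
    IsPassive (diagonal fun i => (E i : ℂ)) (diagonal fun i => (Real.exp (-β * E i) : ℂ)) :=
  fun U hU => by
  rw [energy_diagonal_diagonal_s10, energy_diagonal_conj_diagonal]
  exact sum_exp_mul_le_of_mem_doublyStochastic (normSq_mem_doublyStochastic hU) E hβ

lemma exp_smul_unitary_conj_diagonal {V : Matrix ι ι ℂ} (hV : V ∈ unitaryGroup ι ℂ)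
    (E : ι → ℝ) (β : ℝ) :
    NormedSpace.exp ((-β : ℂ) • (V * diagonal (fun i => (E i : ℂ)) * star V))
      = V * diagonal (fun i => (Real.exp (-β * E i) : ℂ)) * star V := by
  let u : (Matrix ι ι ℂ)ˣ := ⟨V, star V, Unitary.mul_star_self_of_mem hV,
    Unitary.star_mul_self_of_mem hV⟩
  rw [← smul_mul_assoc, ← mul_smul_comm, ← diagonal_smul]
  refine (Matrix.exp_units_conj u _).trans ?_
  rw [Matrix.exp_diagonal, Pi.exp_def, ← Complex.exp_eq_exp_ℂ]
  congr! with i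
  push_cast
  rfl

end Passivity

theorem gibbs_passive {d : ℕ} (H : Matrix (Fin d) (Fin d) ℂ)
    (hH : H.IsHermitian) (β : ℝ) (hβ : 0 ≤ β) :
    IsPassive H (gibbs H β) := by
  set V : Matrix (Fin d) (Fin d) ℂ := (hH.eigenvectorUnitary : Matrix (Fin d) (Fin d) ℂ)
  have hV : V ∈ unitaryGroup (Fin d) ℂ := hH.eigenvectorUnitary.2
  have hspec : H = V * diagonal (fun i => (hH.eigenvalues i : ℂ)) * star V :=
    hH.spectral_theorem
  rw [gibbs, hspec, exp_smul_unitary_conj_diagonal hV, trace_unitary_conj hV, trace_diagonal,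
    ← Complex.ofReal_sum, ← Complex.ofReal_inv]
  exact ((isPassive_diagonal_exp _ hβ).unitary_conj hV).ofReal_smul
    (inv_nonneg.2 (Finset.sum_nonneg fun i _ => (Real.exp_pos _).le))
end
end
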